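/- arXiv:2005.13629 — 5 statements merged into one kernel-verified Lean document; each statement's English description precedes it below -/
import Mathlib

section
/- Let n, t be positive integers. Let Q and Q′ be invertible n×n matrices over ℚ, let A be an n×n permutation matrix, and let U_1, …, U_t be diagonal n×n matrices over ℚ. Set U_a′ = A⁻¹·U_a·A for each a. Suppose that Q⁻¹·U_a·Q = Q′⁻¹·U_a′·Q′ for all a = 1, …, t, and that at least one of the matrices U_1, …, U_t has pairwise distinct diagonal entries. Then the matrix D := Q·Q′⁻¹·A⁻¹ is an invertible diagonal matrix, and consequently Q = D·A·Q′. -/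
/-!
The two conjugations agree, so `U_a` commutes with `D = Q (A Q')⁻¹`. Comparing the
`(i, j)` entries of `U_a D = D U_a` for a diagonal `U_a` gives `(u_i - u_j) D_ij = 0`, and
distinct diagonal entries force `D_ij = 0` off the diagonal.
-/

open Matrix

namespace Matrix

variable {n R : Type*} [Fintype n] [DecidableEq n]

theorem isUnit_permMatrix [CommRing R] (σ : Equiv.Perm n) : IsUnit (σ.permMatrix R) := by
  rw [isUnit_iff_isUnit_det, det_permutation]
  exact σ.sign.isUnit.map (Int.castRingHom R)

theorem IsDiag.of_commute [CommRing R] [NoZeroDivisors R] {D M : Matrix n n R} (hD : D.IsDiag)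
    (hinj : Function.Injective D.diag) (h : Commute D M) : M.IsDiag := by
  intro i j hij
  rw [← hD.diagonal_diag] at h
  have hij' : D i i * M i j = M i j * D j j := by
    simpa only [diagonal_mul, mul_diagonal, diag_apply] using congrFun (congrFun h.eq i) j
  have : (D i i - D j j) * M i j = 0 := by linear_combination hij'
  exact (mul_eq_zero.mp this).resolve_left (sub_ne_zero.mpr (hinj.ne hij))

theorem commute_mul_nonsing_inv_of_conj_eq [CommRing R] {X P S : Matrix n n R} (hP : IsUnit P)
    (hS : IsUnit S) (h : P⁻¹ * X * P = S⁻¹ * X * S) : Commute X (P * S⁻¹) := by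
  have hP' := (isUnit_iff_isUnit_det P).mp hP
  have hS' := (isUnit_iff_isUnit_det S).mp hS
  calc X * (P * S⁻¹) = P * (P⁻¹ * X * P) * S⁻¹ := by
        simp only [← mul_assoc, mul_nonsing_inv P hP', one_mul]
    _ = P * S⁻¹ * X := by
        simp only [h, mul_assoc, mul_nonsing_inv S hS', mul_one]

end Matrix

theorem stmt_2_general (n t : ℕ)
    (Q Q' : Matrix (Fin n) (Fin n) ℚ) (hQ : IsUnit Q) (hQ' : IsUnit Q')
    (σ : Equiv.Perm (Fin n)) (A : Matrix (Fin n) (Fin n) ℚ) (hA : A = σ.permMatrix ℚ)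
    (U : Fin t → Matrix (Fin n) (Fin n) ℚ) (hU : ∀ a, (U a).IsDiag)
    (U' : Fin t → Matrix (Fin n) (Fin n) ℚ) (hU' : ∀ a, U' a = A⁻¹ * U a * A)
    (hconj : ∀ a, Q⁻¹ * U a * Q = Q'⁻¹ * U' a * Q')
    (hdist : ∃ a, ∀ i j : Fin n, i ≠ j → U a i i ≠ U a j j) :
    (Q * Q'⁻¹ * A⁻¹).IsDiag ∧ IsUnit (Q * Q'⁻¹ * A⁻¹) ∧
      Q = (Q * Q'⁻¹ * A⁻¹) * A * Q' := by
  obtain ⟨a, ha⟩ := hdist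
  have hA_unit : IsUnit A := hA ▸ isUnit_permMatrix σ
  have hconj_a : Q⁻¹ * U a * Q = (A * Q')⁻¹ * U a * (A * Q') := by
    rw [hconj a, hU' a, Matrix.mul_inv_rev]
    simp only [mul_assoc]
  have hcomm : Commute (U a) (Q * Q'⁻¹ * A⁻¹) := by
    simpa only [Matrix.mul_inv_rev, mul_assoc] using
      commute_mul_nonsing_inv_of_conj_eq hQ (hA_unit.mul hQ') hconj_a
  refine ⟨(hU a).of_commute (fun i j h => by_contra fun hij => ha i j hij h) hcomm,
    (hQ.mul (isUnit_nonsing_inv_iff.mpr hQ')).mul (isUnit_nonsing_inv_iff.mpr hA_unit), ?_⟩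
  rw [mul_assoc _ A⁻¹ A, nonsing_inv_mul A ((isUnit_iff_isUnit_det A).mp hA_unit), mul_one,
    mul_assoc, nonsing_inv_mul Q' ((isUnit_iff_isUnit_det Q').mp hQ'), mul_one]

theorem stmt_2 (n t : ℕ) (hn : 0 < n) (ht : 0 < t)
    (Q Q' : Matrix (Fin n) (Fin n) ℚ) (hQ : IsUnit Q) (hQ' : IsUnit Q')
    (σ : Equiv.Perm (Fin n)) (A : Matrix (Fin n) (Fin n) ℚ) (hA : A = σ.permMatrix ℚ)
    (U : Fin t → Matrix (Fin n) (Fin n) ℚ) (hU : ∀ a, (U a).IsDiag)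
    (U' : Fin t → Matrix (Fin n) (Fin n) ℚ) (hU' : ∀ a, U' a = A⁻¹ * U a * A)
    (hconj : ∀ a, Q⁻¹ * U a * Q = Q'⁻¹ * U' a * Q')
    (hdist : ∃ a, ∀ i j : Fin n, i ≠ j → U a i i ≠ U a j j) :
    (Q * Q'⁻¹ * A⁻¹).IsDiag ∧ IsUnit (Q * Q'⁻¹ * A⁻¹) ∧
      Q = (Q * Q'⁻¹ * A⁻¹) * A * Q' :=
  stmt_2_general n t Q Q' hQ hQ' σ A hA U hU U' hU' hconj hdist
end

section
/- Let n, p be positive integers with p ≤ n. Let P be a p×n matrix over ℚ, Q an n×p matrix over ℚ, and U_a, U_b diagonal n×n matrices over ℚ. Suppose W_0 = P·Q is invertible, and set W_a = P·U_a·Q, W_b = P·U_b·Q and B = Q·W_0⁻¹·P − 1_n. Then W_a·W_0⁻¹·W_b − W_b·W_0⁻¹·W_a = P·U_a·B·U_b·Q − P·U_b·B·U_a·Q. -/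
open Matrix

theorem Matrix.IsDiag.commute {n α : Type*} [Fintype n] [NonUnitalNonAssocCommSemiring α]
    {A B : Matrix n n α} (hA : A.IsDiag) (hB : B.IsDiag) : Commute A B := by
  classical
  rw [← hA.diagonal_diag, ← hB.diagonal_diag]
  exact commute_diagonal _ _

-- Expanding `Q * M * P - 1`, the extra terms `P * U * V * Q` and `P * V * U * Q` cancel.
theorem Matrix.mul_mul_sub_mul_mul_eq_of_commute {l m α : Type*} [Fintype l] [Fintype m]
    [DecidableEq m] [Ring α] (P : Matrix l m α) (Q : Matrix m l α) (M : Matrix l l α)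
    {U V : Matrix m m α} (hUV : Commute U V) :
    P * U * Q * M * (P * V * Q) - P * V * Q * M * (P * U * Q) =
      P * U * (Q * M * P - 1) * V * Q - P * V * (Q * M * P - 1) * U * Q := by
  have hUVQ : U * (V * Q) = V * (U * Q) := by rw [← Matrix.mul_assoc, hUV.eq, Matrix.mul_assoc]
  simp only [Matrix.mul_sub, Matrix.sub_mul, Matrix.mul_one, Matrix.mul_assoc]
  rw [hUVQ]
  abel

theorem stmt_8_general (n p : ℕ)
    (P : Matrix (Fin p) (Fin n) ℚ) (Q : Matrix (Fin n) (Fin p) ℚ)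
    (Ua Ub : Matrix (Fin n) (Fin n) ℚ) (hUa : Ua.IsDiag) (hUb : Ub.IsDiag)
    (W₀ : Matrix (Fin p) (Fin p) ℚ)
    (Wa : Matrix (Fin p) (Fin p) ℚ) (hWa : Wa = P * Ua * Q)
    (Wb : Matrix (Fin p) (Fin p) ℚ) (hWb : Wb = P * Ub * Q)
    (B : Matrix (Fin n) (Fin n) ℚ) (hB : B = Q * W₀⁻¹ * P - 1) :
    Wa * W₀⁻¹ * Wb - Wb * W₀⁻¹ * Wa = P * Ua * B * Ub * Q - P * Ub * B * Ua * Q := by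
  subst hWa hWb hB
  exact mul_mul_sub_mul_mul_eq_of_commute P Q W₀⁻¹ (hUa.commute hUb)

theorem stmt_8 (n p : ℕ) (hn : 0 < n) (hp : 0 < p) (hpn : p ≤ n)
    (P : Matrix (Fin p) (Fin n) ℚ) (Q : Matrix (Fin n) (Fin p) ℚ)
    (Ua Ub : Matrix (Fin n) (Fin n) ℚ) (hUa : Ua.IsDiag) (hUb : Ub.IsDiag)
    (hW₀ : IsUnit (P * Q))
    (W₀ : Matrix (Fin p) (Fin p) ℚ) (hW₀' : W₀ = P * Q)
    (Wa : Matrix (Fin p) (Fin p) ℚ) (hWa : Wa = P * Ua * Q)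
    (Wb : Matrix (Fin p) (Fin p) ℚ) (hWb : Wb = P * Ub * Q)
    (B : Matrix (Fin n) (Fin n) ℚ) (hB : B = Q * W₀⁻¹ * P - 1) :
    Wa * W₀⁻¹ * Wb - Wb * W₀⁻¹ * Wa = P * Ua * B * Ub * Q - P * Ub * B * Ua * Q :=
  stmt_8_general n p P Q Ua Ub hUa hUb W₀ Wa hWa Wb hWb B hB
end

section
/- Let n, p, r be positive integers with p ≤ n. Let P be a p×n matrix over ℚ and Q an n×p matrix over ℚ such that W_0 = P·Q is invertible, and set B = Q·W_0⁻¹·P − 1_n. Suppose B = B_1·B_2 where B_1 is an n×r matrix and B_2 is an r×n matrix over ℚ such that B_2 has rank r (i.e., the linear map defined by B_2 is surjective). Then P·B_1 = 0. -/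
open Matrix

theorem Matrix.eq_zero_of_rank_eq_zero {l m K : Type*} [Field K] [Fintype m] [DecidableEq m]
    {A : Matrix l m K} (hA : A.rank = 0) : A = 0 := by
  rw [Matrix.rank, Submodule.finrank_eq_zero, LinearMap.range_eq_bot] at hA
  exact toLin'.map_eq_zero_iff.mp hA

theorem Matrix.eq_zero_of_mul_eq_zero_of_rank_eq_card {l m n K : Type*} [Field K] [Finite l]
    [Fintype m] [Fintype n] {A : Matrix l m K} {B : Matrix m n K} (hAB : A * B = 0)
    (hB : B.rank = Fintype.card m) : A = 0 := by
  classical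
  have := rank_add_rank_le_card_of_mul_eq_zero hAB
  exact eq_zero_of_rank_eq_zero (by omega)

theorem Matrix.mul_mul_inv_mul_sub_one {m n K : Type*} [CommRing K] [Fintype m] [DecidableEq m]
    [Fintype n] [DecidableEq n] (P : Matrix m n K) (Q : Matrix n m K) (hPQ : IsUnit (P * Q)) :
    P * (Q * (P * Q)⁻¹ * P - 1) = 0 := by
  rw [Matrix.mul_sub, Matrix.mul_one, ← Matrix.mul_assoc, ← Matrix.mul_assoc,
    mul_nonsing_inv _ ((isUnit_iff_isUnit_det _).mp hPQ), Matrix.one_mul, sub_self]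

theorem stmt_10_general (n p r : ℕ)
    (P : Matrix (Fin p) (Fin n) ℚ) (Q : Matrix (Fin n) (Fin p) ℚ)
    (hW₀ : IsUnit (P * Q))
    (B : Matrix (Fin n) (Fin n) ℚ) (hB : B = Q * (P * Q)⁻¹ * P - 1)
    (B₁ : Matrix (Fin n) (Fin r) ℚ) (B₂ : Matrix (Fin r) (Fin n) ℚ)
    (hfac : B = B₁ * B₂) (hB₂ : B₂.rank = r) :
    P * B₁ = 0 := by
  refine eq_zero_of_mul_eq_zero_of_rank_eq_card ?_ (by rw [hB₂, Fintype.card_fin])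
  rw [Matrix.mul_assoc, ← hfac, hB, mul_mul_inv_mul_sub_one P Q hW₀]

theorem stmt_10 (n p r : ℕ) (hn : 0 < n) (hp : 0 < p) (hr : 0 < r) (hpn : p ≤ n)
    (P : Matrix (Fin p) (Fin n) ℚ) (Q : Matrix (Fin n) (Fin p) ℚ)
    (hW₀ : IsUnit (P * Q))
    (B : Matrix (Fin n) (Fin n) ℚ) (hB : B = Q * (P * Q)⁻¹ * P - 1)
    (B₁ : Matrix (Fin n) (Fin r) ℚ) (B₂ : Matrix (Fin r) (Fin n) ℚ)
    (hfac : B = B₁ * B₂) (hB₂ : B₂.rank = r) :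
    P * B₁ = 0 :=
  stmt_10_general n p r P Q hW₀ B hB B₁ B₂ hfac hB₂
end

section
/- Let n, p be positive integers with p < n and set r = n − p. Let P be a p×n matrix over ℚ and Q an n×p matrix over ℚ such that W_0 = P·Q is invertible, and set B = Q·W_0⁻¹·P − 1_n. Suppose B = B_1·B_2 where B_1 is an n×r matrix and B_2 is an r×n matrix over ℚ of rank r. Then the n×n matrix Q′ = [Q | B_1], obtained by concatenating the columns of Q and B_1, is invertible. -/
/-! Since `B₁ * B₂ = Q * (W₀⁻¹ * P) - 1`, the block matrix `[W₀⁻¹ * P; -B₂]` is a right inverse of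
`[Q | B₁]`, and a one-sided inverse of a square matrix is two-sided. -/

open Matrix

namespace Matrix

variable {R m n₁ n₂ : Type*}

theorem fromCols_mul_fromRows_neg_eq_one [Ring R] [Fintype n₁] [Fintype n₂] [DecidableEq m]
    {Q : Matrix m n₁ R} {X : Matrix n₁ m R} {B₁ : Matrix m n₂ R} {B₂ : Matrix n₂ m R}
    (h : B₁ * B₂ = Q * X - 1) : fromCols Q B₁ * fromRows X (-B₂) = 1 := by
  rw [fromCols_mul_fromRows, Matrix.mul_neg, h, ← sub_eq_add_neg, sub_sub_cancel]

end Matrix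

theorem stmt_11_general (n p : ℕ) (hpn : p < n)
    (P : Matrix (Fin p) (Fin n) ℚ) (Q : Matrix (Fin n) (Fin p) ℚ)
    (B : Matrix (Fin n) (Fin n) ℚ) (hB : B = Q * (P * Q)⁻¹ * P - 1)
    (B₁ : Matrix (Fin n) (Fin (n - p)) ℚ) (B₂ : Matrix (Fin (n - p)) (Fin n) ℚ)
    (hfac : B = B₁ * B₂) :
    ∃ M : Matrix (Fin p ⊕ Fin (n - p)) (Fin n) ℚ,
      Matrix.fromCols Q B₁ * M = 1 ∧ M * Matrix.fromCols Q B₁ = 1 := by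
  have hright : fromCols Q B₁ * fromRows ((P * Q)⁻¹ * P) (-B₂) = 1 :=
    fromCols_mul_fromRows_neg_eq_one (by rw [← hfac, hB, Matrix.mul_assoc])
  have e : Fin n ≃ Fin p ⊕ Fin (n - p) :=
    (finCongr (Nat.add_sub_cancel' hpn.le).symm).trans finSumFinEquiv.symm
  exact ⟨_, hright, (fromCols_mul_fromRows_eq_one_comm e _ _ _ _).mp hright⟩

theorem stmt_11 (n p : ℕ) (hn : 0 < n) (hp : 0 < p) (hpn : p < n)
    (P : Matrix (Fin p) (Fin n) ℚ) (Q : Matrix (Fin n) (Fin p) ℚ)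
    (hW₀ : IsUnit (P * Q))
    (B : Matrix (Fin n) (Fin n) ℚ) (hB : B = Q * (P * Q)⁻¹ * P - 1)
    (B₁ : Matrix (Fin n) (Fin (n - p)) ℚ) (B₂ : Matrix (Fin (n - p)) (Fin n) ℚ)
    (hfac : B = B₁ * B₂) (hB₂ : B₂.rank = n - p) :
    ∃ M : Matrix (Fin p ⊕ Fin (n - p)) (Fin n) ℚ,
      Matrix.fromCols Q B₁ * M = 1 ∧ M * Matrix.fromCols Q B₁ = 1 :=
  stmt_11_general n p hpn P Q B hB B₁ B₂ hfac
end

section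
/- Let K be a field and V, W vector spaces over K. Let f, g : V → W be linear maps such that ker(f) + ker(g) = V. Then the range of f is contained in the range of f − g. In particular, for p×p matrices M, N over ℚ with ker(M) + ker(N) = ℚᵖ, the column space of M is contained in the column space of M − N. -/
open Matrix

theorem LinearMap.range_le_range_sub_of_ker_sup_ker_eq_top {R M N : Type*} [Semiring R]
    [AddCommMonoid M] [AddCommGroup N] [Module R M] [Module R N] {f g : M →ₗ[R] N}
    (h : ker f ⊔ ker g = ⊤) : range f ≤ range (f - g) := by
  rintro _ ⟨v, rfl⟩
  obtain ⟨a, ha, b, hb, rfl⟩ := Submodule.mem_sup.mp (h ▸ Submodule.mem_top : v ∈ ker f ⊔ ker g)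
  exact ⟨b, by simp [mem_ker.mp ha, mem_ker.mp hb]⟩

theorem Matrix.mulVecLin_sub {R m n : Type*} [CommRing R] [Fintype n] (M N : Matrix m n R) :
    (M - N).mulVecLin = M.mulVecLin - N.mulVecLin :=
  map_sub (mulVecBilin R R) M N

theorem stmt_13 :
    (∀ (K : Type) [Field K] (V W : Type) [AddCommGroup V] [Module K V]
      [AddCommGroup W] [Module K W] (f g : V →ₗ[K] W),
      LinearMap.ker f ⊔ LinearMap.ker g = ⊤ →
      LinearMap.range f ≤ LinearMap.range (f - g)) ∧
    (∀ (p : ℕ) (M N : Matrix (Fin p) (Fin p) ℚ),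
      LinearMap.ker M.mulVecLin ⊔ LinearMap.ker N.mulVecLin = ⊤ →
      LinearMap.range M.mulVecLin ≤ LinearMap.range (M - N).mulVecLin) :=
  ⟨fun _ _ _ _ _ _ _ _ _ _ h => LinearMap.range_le_range_sub_of_ker_sup_ker_eq_top h,
    fun _ M N h => mulVecLin_sub M N ▸ LinearMap.range_le_range_sub_of_ker_sup_ker_eq_top h⟩
end
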